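/- For all nonnegative integers n and all integers k, one has C_μ(2n+1, k-1) + C_μ(2n+1, k) = (1 + 2μ·θ(k)/(n+1))·C_μ(2n+2, k), where θ(k) is 1 if k is odd and 0 otherwise (μ-deformed Pascal identity for odd upper index). -/

import Mathlib

open Finset

/-- The μ-deformed factorial function γ_μ. -/
noncomputable def gammaMu (μ : ℝ) : ℕ → ℝ
  | 0 => 1
  | n + 1 => ((n + 1 : ℝ) + 2 * μ * (if Odd (n + 1) then 1 else 0)) * gammaMu μ n

/-- The μ-deformed binomial coefficient C_μ(n,k), zero outside 0 ≤ k ≤ n. -/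
noncomputable def binomMu (μ : ℝ) (n : ℕ) (k : ℤ) : ℝ :=
  if 0 ≤ k ∧ k ≤ (n : ℤ) then gammaMu μ n / (gammaMu μ (n - k.toNat) * gammaMu μ k.toNat) else 0

/-- The n-th μ-deformed binomial polynomial p_{n,μ}(x,y). -/
noncomputable def pMu (μ : ℝ) (n : ℕ) (x y : ℂ) : ℂ :=
  ∑ k ∈ Finset.range (n + 1), (binomMu μ n k : ℂ) * x ^ k * y ^ (n - k)

/-- The μ-deformed exponential function. -/
noncomputable def expMu (μ : ℝ) (z : ℂ) : ℂ :=
  ∑' n : ℕ, z ^ n / (gammaMu μ n : ℂ)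

/-- The Bessel function of the first kind of order ν, for positive real argument. -/
noncomputable def besselJ (ν x : ℝ) : ℝ :=
  ∑' m : ℕ, ((-1) ^ m / (Nat.factorial m * Real.Gamma (ν + m + 1))) * (x / 2) ^ ((2 * m : ℝ) + ν)

/-!
Write `k = i + 1` and `m = 2n - i`. Since `i + m` is even, `θ(i + 1) = θ(m + 1)`, so the two
factors `γ_μ(i + 1) / γ_μ(i)` and `γ_μ(m + 1) / γ_μ(m)` carry the same deformation `2μθ(k)`, and
`C_μ(2n+1, k-1) + C_μ(2n+1, k)` becomes `γ_μ(2n+1) (2n + 2 + 4μθ(k)) / (γ_μ(m+1) γ_μ(i+1))`.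
On the other side the upper index `2n + 2` is even, so `γ_μ(2n+2) = (2n+2) γ_μ(2n+1)` is
undeformed, and `(1 + 2μθ(k)/(n+1)) (2n+2) = 2n + 2 + 4μθ(k)`.
-/

section

variable {μ : ℝ}

lemma gammaMu_succ (μ : ℝ) (m : ℕ) :
    gammaMu μ (m + 1) = ((m + 1 : ℝ) + 2 * μ * (if Odd (m + 1) then 1 else 0)) * gammaMu μ m :=
  rfl

lemma gammaMu_pos (hμ : -(1/2 : ℝ) < μ) (m : ℕ) : 0 < gammaMu μ m := by
  induction m with
  | zero => exact one_pos
  | succ m ih =>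
    refine mul_pos ?_ ih
    split_ifs <;> linarith [(m.cast_nonneg : (0 : ℝ) ≤ m)]

lemma binomMu_natCast {n j : ℕ} (h : j ≤ n) :
    binomMu μ n j = gammaMu μ n / (gammaMu μ (n - j) * gammaMu μ j) := by
  rw [binomMu, if_pos ⟨j.cast_nonneg, by exact_mod_cast h⟩, Int.toNat_natCast]

lemma binomMu_natCast_of_lt {n j : ℕ} (h : n < j) : binomMu μ n j = 0 :=
  if_neg fun hk => by omega

lemma binomMu_of_neg {n : ℕ} {k : ℤ} (h : k < 0) : binomMu μ n k = 0 :=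
  if_neg fun hk => by omega

lemma binomMu_zero_right {n : ℕ} (hγ : gammaMu μ n ≠ 0) : binomMu μ n 0 = 1 := by
  rw [← Nat.cast_zero, binomMu_natCast n.zero_le, Nat.sub_zero, gammaMu, mul_one, div_self hγ]

lemma binomMu_self {n : ℕ} (hγ : gammaMu μ n ≠ 0) : binomMu μ n n = 1 := by
  rw [binomMu_natCast le_rfl, Nat.sub_self, gammaMu, one_mul, div_self hγ]

lemma gammaMu_even_succ (μ : ℝ) (n : ℕ) :
    gammaMu μ (2 * n + 2) = (2 * n + 2) * gammaMu μ (2 * n + 1) := by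
  rw [gammaMu_succ, if_neg (by rw [Nat.odd_iff]; omega)]
  push_cast
  ring

lemma binomMu_pascal_odd_of_add_eq (hγ : ∀ m, gammaMu μ m ≠ 0) {n i m : ℕ}
    (h : i + m = 2 * n) :
    binomMu μ (2 * n + 1) i + binomMu μ (2 * n + 1) (i + 1 : ℕ) =
      (1 + 2 * μ * (if Odd (i + 1) then 1 else 0) / (n + 1)) * binomMu μ (2 * n + 2) (i + 1 : ℕ) := by
  set θ : ℝ := if Odd (i + 1) then 1 else 0
  have hθ : Odd (m + 1) ↔ Odd (i + 1) := by simp only [Nat.odd_iff]; omega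
  have hγi : gammaMu μ (i + 1) = (i + 1 + 2 * μ * θ) * gammaMu μ i := gammaMu_succ μ i
  have hγm : gammaMu μ (m + 1) = (m + 1 + 2 * μ * θ) * gammaMu μ m := by
    simp only [gammaMu_succ, hθ, θ]
  have hi := left_ne_zero_of_mul (hγi ▸ hγ (i + 1))
  have hm := left_ne_zero_of_mul (hγm ▸ hγ (m + 1))
  have hmi : (m : ℝ) = 2 * n - i := by rw [eq_sub_iff_add_eq']; exact_mod_cast h
  rw [binomMu_natCast (by omega), binomMu_natCast (by omega), binomMu_natCast (by omega),
    show 2 * n + 1 - i = m + 1 by omega, show 2 * n + 1 - (i + 1) = m by omega,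
    show 2 * n + 2 - (i + 1) = m + 1 by omega, gammaMu_even_succ, hγi, hγm, hmi]
  rw [hmi] at hm
  have hγi₀ := hγ i
  have hγm₀ := hγ m
  have hγodd := hγ (2 * n + 1)
  field_simp
  ring

end

theorem binomMu_pascal_odd (μ : ℝ) (hμ : -(1/2 : ℝ) < μ) (n : ℕ) (k : ℤ) :
    binomMu μ (2 * n + 1) (k - 1) + binomMu μ (2 * n + 1) k =
      (1 + 2 * μ * (if Odd k then 1 else 0) / (n + 1)) * binomMu μ (2 * n + 2) k := by
  have hγ m : gammaMu μ m ≠ 0 := (gammaMu_pos hμ m).ne'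
  rcases lt_or_ge k 0 with hk | hk
  · simp only [binomMu_of_neg hk, binomMu_of_neg (show k - 1 < 0 by omega), add_zero, mul_zero]
  lift k to ℕ using hk with j
  rcases j with _ | i
  · simp [binomMu_of_neg (show (-1 : ℤ) < 0 by norm_num), binomMu_zero_right (hγ _)]
  have hk : ((i + 1 : ℕ) : ℤ) - 1 = i := by push_cast; ring
  rw [hk]
  simp only [Int.odd_coe_nat]
  rcases lt_trichotomy i (2 * n + 1) with hi | rfl | hi
  · exact binomMu_pascal_odd_of_add_eq hγ (m := 2 * n - i) (by omega)
  · rw [binomMu_self (hγ _), binomMu_natCast_of_lt (by omega), if_neg (by rw [Nat.odd_iff]; omega),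
      show 2 * n + 1 + 1 = 2 * n + 2 by ring, binomMu_self (hγ _)]
    ring
  · rw [binomMu_natCast_of_lt hi, binomMu_natCast_of_lt (by omega),
      binomMu_natCast_of_lt (by omega)]
    ring
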